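/- Consider a finite discounted MDP: a finite nonempty state space S, a finite nonempty action space U, a transition kernel P : S → U → PMF(S), a cost function c : S × U → ℝ with |c(s,u)| ≤ 1 for all (s,u), a discount factor γ ∈ [0,1), and an initial distribution μ₀ : PMF(S). For any two stationary policies π, π̄ : S → PMF(U), the performance difference identity holds: J(π̄) = J(π) + Σ_{t=0}^∞ γ^t E_{(s,u)~ρ_t^π̄}[A^π(s,u)], where A^π(s,u) = Q^π(s,u) − V^π(s) is the advantage function of π and ρ_t^π̄ is the time-t state–action distribution under π̄ started from μ₀. -/

import Mathlib

/-!
By the Bellman equation `Q^π(s,u) = c(s,u) + γ ∑_{s'} P(s'|s,u) V^π(s')`, and because averaging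
`V^π(s')` over the action `u' ~ π̄(s')` changes nothing, the `t`-th advantage term is
`γ^t E_{ρ_t^π̄}[A^π] = γ^t E_{ρ_t^π̄}[c] + v_{t+1} - v_t` with `v_t = γ^t E_{ρ_t^π̄}[V^π(s)]`.
Summing over `t`, the first part gives `J(π̄)` and the second telescopes to `-v_0 = -J(π)`.
Every series converges because a step of the chain does not increase the `ℓ¹` mass of a signed
state–action vector, so the `t`-th terms are dominated by a multiple of `γ^t`.
-/

/-- One step of the evolution of a state–action distribution under transition
kernel `P` and stationary policy `π`:
`(saStep P π d) (s', u') = (∑ (s,u), d (s,u) * P s u s') * π s' u'`. -/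
noncomputable def saStep {S U : Type*} [Fintype S] [Fintype U]
    (P : S → U → S → ℝ) (π : S → U → ℝ) (d : S × U → ℝ) : S × U → ℝ :=
  fun su => (∑ p : S × U, d p * P p.1 p.2 su.1) * π su.1 su.2

/-- The state–action distribution at time `t`, starting from the initial
state–action distribution `init`, following policy `π`. -/
noncomputable def saDist {S U : Type*} [Fintype S] [Fintype U]
    (P : S → U → S → ℝ) (π : S → U → ℝ) (init : S × U → ℝ) : ℕ → S × U → ℝ
  | 0 => init
  | t + 1 => saStep P π (saDist P π init t)

/-- Expected cost under a state–action distribution `d`. -/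
noncomputable def expCost {S U : Type*} [Fintype S] [Fintype U]
    (c : S × U → ℝ) (d : S × U → ℝ) : ℝ :=
  ∑ p : S × U, d p * c p

/-- Dirac distribution on the state–action pair `(s, u)`. -/
def deltaSA {S U : Type*} [DecidableEq S] [DecidableEq U] (s : S) (u : U) :
    S × U → ℝ :=
  fun p => if p = (s, u) then 1 else 0

/-- The state–action value function
`Q^π(s,u) = ∑_{t} γ^t E[c(s_t,u_t) | s_0 = s, u_0 = u]`. -/
noncomputable def Qval {S U : Type*} [Fintype S] [Fintype U]
    [DecidableEq S] [DecidableEq U]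
    (P : S → U → S → ℝ) (c : S × U → ℝ) (γ : ℝ) (π : S → U → ℝ)
    (s : S) (u : U) : ℝ :=
  ∑' t : ℕ, γ ^ t * expCost c (saDist P π (deltaSA s u) t)

/-- The state value function `V^π(s) = E_{u ~ π(s)}[Q^π(s,u)]`. -/
noncomputable def Vval {S U : Type*} [Fintype S] [Fintype U]
    [DecidableEq S] [DecidableEq U]
    (P : S → U → S → ℝ) (c : S × U → ℝ) (γ : ℝ) (π : S → U → ℝ) (s : S) : ℝ :=
  ∑ u : U, π s u * Qval P c γ π s u

/-- The advantage function `A^π(s,u) = Q^π(s,u) − V^π(s)`. -/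
noncomputable def Aval {S U : Type*} [Fintype S] [Fintype U]
    [DecidableEq S] [DecidableEq U]
    (P : S → U → S → ℝ) (c : S × U → ℝ) (γ : ℝ) (π : S → U → ℝ)
    (p : S × U) : ℝ :=
  Qval P c γ π p.1 p.2 - Vval P c γ π p.1

/-- The initial state–action distribution `ρ₀^π`: sample `s ~ μ₀`, `u ~ π(s)`. -/
noncomputable def initSA {S U : Type*} (μ₀ : S → ℝ) (π : S → U → ℝ) :
    S × U → ℝ :=
  fun p => μ₀ p.1 * π p.1 p.2

/-- The discounted objective `J(π) = ∑_t γ^t E_{(s,u) ~ ρ_t^π}[c(s,u)]`. -/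
noncomputable def Jval {S U : Type*} [Fintype S] [Fintype U]
    (P : S → U → S → ℝ) (c : S × U → ℝ) (γ : ℝ) (μ₀ : S → ℝ)
    (π : S → U → ℝ) : ℝ :=
  ∑' t : ℕ, γ ^ t * expCost c (saDist P π (initSA μ₀ π) t)


open Finset

section
variable {S U : Type*} [Fintype S] [Fintype U]

theorem saDist_succ' (P : S → U → S → ℝ) (π : S → U → ℝ) (d : S × U → ℝ) (t : ℕ) :
    saDist P π d (t + 1) = saDist P π (saStep P π d) t := by
  induction t with
  | zero => rfl
  | succ t ih => exact congrArg (saStep P π) ih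

theorem expCost_initSA (f : S × U → ℝ) (μ : S → ℝ) (π : S → U → ℝ) :
    expCost f (initSA μ π) = ∑ s, μ s * ∑ u, π s u * f (s, u) := by
  simp only [expCost, initSA, Fintype.sum_prod_type, mul_sum, mul_assoc]

theorem expCost_comp_fst_initSA (f : S → ℝ) (μ : S → ℝ) {π : S → U → ℝ}
    (hπ : ∀ s, ∑ u, π s u = 1) :
    expCost (fun p => f p.1) (initSA μ π) = ∑ s, μ s * f s := by
  simp only [expCost_initSA, ← sum_mul, hπ, one_mul]

theorem expCost_comp_fst_saStep (P : S → U → S → ℝ) {π : S → U → ℝ}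
    (hπ : ∀ s, ∑ u, π s u = 1) (f : S → ℝ) (d : S × U → ℝ) :
    expCost (fun p => f p.1) (saStep P π d)
      = expCost (fun p => ∑ s', P p.1 p.2 s' * f s') d := by
  rw [show saStep P π d = initSA (fun s' => ∑ p, d p * P p.1 p.2 s') π from rfl,
    expCost_comp_fst_initSA f _ hπ]
  simp only [expCost, sum_mul, mul_sum, mul_assoc]
  exact sum_comm

variable {P : S → U → S → ℝ} {π : S → U → ℝ}

theorem sum_saStep (hP : ∀ s u, P s u ∈ stdSimplex ℝ S) (hπ : ∀ s, π s ∈ stdSimplex ℝ U)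
    (d : S × U → ℝ) : ∑ p, saStep P π d p = ∑ p, d p := by
  simpa [expCost, (hP _ _).2] using expCost_comp_fst_saStep P (fun s => (hπ s).2) (fun _ => 1) d

theorem sum_abs_saDist_le (hP : ∀ s u, P s u ∈ stdSimplex ℝ S)
    (hπ : ∀ s, π s ∈ stdSimplex ℝ U) (d : S × U → ℝ) (t : ℕ) :
    ∑ p, |saDist P π d t p| ≤ ∑ p, |d p| := by
  induction t generalizing d with
  | zero => rfl
  | succ t ih =>
    rw [saDist_succ']
    refine (ih _).trans ?_
    calc ∑ p, |saStep P π d p| ≤ ∑ p, saStep P π (fun q => |d q|) p := by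
          refine sum_le_sum fun p _ => ?_
          rw [saStep, saStep, abs_mul, abs_of_nonneg ((hπ _).1 _)]
          gcongr
          · exact (hπ _).1 _
          · refine (abs_sum_le_sum_abs _ _).trans_eq (sum_congr rfl fun q _ => ?_)
            rw [abs_mul, abs_of_nonneg ((hP _ _).1 _)]
      _ = ∑ p, |d p| := sum_saStep hP hπ _

theorem abs_expCost_le (f d : S × U → ℝ) : |expCost f d| ≤ (∑ p, |d p|) * ∑ p, |f p| := by
  rw [expCost, sum_mul]
  refine (abs_sum_le_sum_abs _ _).trans (sum_le_sum fun p _ => ?_)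
  rw [abs_mul]
  gcongr
  exact single_le_sum (fun q _ => abs_nonneg (f q)) (mem_univ p)

theorem summable_expCost_saDist {γ : ℝ} (hγ0 : 0 ≤ γ) (hγ1 : γ < 1)
    (hP : ∀ s u, P s u ∈ stdSimplex ℝ S) (hπ : ∀ s, π s ∈ stdSimplex ℝ U)
    (f d : S × U → ℝ) : Summable fun t => γ ^ t * expCost f (saDist P π d t) := by
  refine ((summable_geometric_of_lt_one hγ0 hγ1).mul_right
    ((∑ p, |d p|) * ∑ p, |f p|)).of_norm_bounded fun t => ?_
  rw [Real.norm_eq_abs, abs_mul, abs_of_nonneg (pow_nonneg hγ0 t)]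
  gcongr
  exact (abs_expCost_le f _).trans
    (mul_le_mul_of_nonneg_right (sum_abs_saDist_le hP hπ d t) (sum_nonneg fun _ _ => abs_nonneg _))

end

section
variable {S U : Type*} [Fintype S] [Fintype U] [DecidableEq S] [DecidableEq U]

theorem expCost_deltaSA (f : S × U → ℝ) (s : S) (u : U) : expCost f (deltaSA s u) = f (s, u) := by
  simp [expCost, deltaSA]

theorem saStep_deltaSA (P : S → U → S → ℝ) (π : S → U → ℝ) (s : S) (u : U) :
    saStep P π (deltaSA s u) = initSA (P s u) π := by
  ext p
  simp [saStep, initSA, deltaSA, ite_mul]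

theorem saDist_eq_sum_deltaSA (P : S → U → S → ℝ) (π : S → U → ℝ) (d : S × U → ℝ) (t : ℕ)
    (q : S × U) : saDist P π d t q = ∑ p, d p * saDist P π (deltaSA p.1 p.2) t q := by
  induction t generalizing q with
  | zero => simp [saDist, deltaSA]
  | succ t ih =>
    simp only [saDist, saStep, ih, sum_mul, mul_sum]
    rw [sum_comm]
    exact sum_congr rfl fun p _ => sum_congr rfl fun r _ => by ring

theorem expCost_saDist_eq_sum_deltaSA (P : S → U → S → ℝ) (π : S → U → ℝ)
    (f d : S × U → ℝ) (t : ℕ) :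
    expCost f (saDist P π d t) = ∑ p, d p * expCost f (saDist P π (deltaSA p.1 p.2) t) := by
  simp only [expCost, saDist_eq_sum_deltaSA P π d t, sum_mul, mul_sum]
  rw [sum_comm]
  exact sum_congr rfl fun p _ => sum_congr rfl fun r _ => by ring

variable {P : S → U → S → ℝ} {π : S → U → ℝ} {γ : ℝ}

theorem tsum_expCost_saDist_eq_sum_Qval (hγ0 : 0 ≤ γ) (hγ1 : γ < 1)
    (hP : ∀ s u, P s u ∈ stdSimplex ℝ S) (hπ : ∀ s, π s ∈ stdSimplex ℝ U)
    (c d : S × U → ℝ) :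
    ∑' t, γ ^ t * expCost c (saDist P π d t) = ∑ p, d p * Qval P c γ π p.1 p.2 := by
  simp only [expCost_saDist_eq_sum_deltaSA P π c d, mul_sum]
  rw [Summable.tsum_finsetSum fun p _ => by
    simpa only [mul_left_comm] using (summable_expCost_saDist hγ0 hγ1 hP hπ c _).mul_left (d p)]
  refine sum_congr rfl fun p _ => ?_
  simp only [Qval, ← tsum_mul_left, mul_left_comm]

theorem Jval_eq_sum_Vval (hγ0 : 0 ≤ γ) (hγ1 : γ < 1)
    (hP : ∀ s u, P s u ∈ stdSimplex ℝ S) (hπ : ∀ s, π s ∈ stdSimplex ℝ U)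
    (c : S × U → ℝ) (μ : S → ℝ) : Jval P c γ μ π = ∑ s, μ s * Vval P c γ π s := by
  rw [Jval, tsum_expCost_saDist_eq_sum_Qval hγ0 hγ1 hP hπ]
  exact expCost_initSA (fun p => Qval P c γ π p.1 p.2) μ π

theorem Qval_eq_add_sum_Vval (hγ0 : 0 ≤ γ) (hγ1 : γ < 1)
    (hP : ∀ s u, P s u ∈ stdSimplex ℝ S) (hπ : ∀ s, π s ∈ stdSimplex ℝ U)
    (c : S × U → ℝ) (s : S) (u : U) :
    Qval P c γ π s u = c (s, u) + γ * ∑ s', P s u s' * Vval P c γ π s' := by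
  rw [Qval, (summable_expCost_saDist hγ0 hγ1 hP hπ c _).tsum_eq_zero_add]
  simp only [saDist_succ', saStep_deltaSA, pow_succ', mul_assoc, tsum_mul_left]
  rw [← Jval_eq_sum_Vval hγ0 hγ1 hP hπ c (P s u), saDist, expCost_deltaSA, pow_zero, one_mul]
  rfl

theorem expCost_Aval (hγ0 : 0 ≤ γ) (hγ1 : γ < 1)
    (hP : ∀ s u, P s u ∈ stdSimplex ℝ S) (hπ : ∀ s, π s ∈ stdSimplex ℝ U)
    {π' : S → U → ℝ} (hπ' : ∀ s, ∑ u, π' s u = 1) (c d : S × U → ℝ) :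
    expCost (Aval P c γ π) d
      = expCost c d + γ * expCost (fun p => Vval P c γ π p.1) (saStep P π' d)
        - expCost (fun p => Vval P c γ π p.1) d := by
  rw [expCost_comp_fst_saStep P hπ']
  simp only [expCost, Aval, Qval_eq_add_sum_Vval hγ0 hγ1 hP hπ, mul_sub, mul_add,
    sum_sub_distrib, sum_add_distrib, mul_sum, mul_left_comm _ γ]

end

theorem performance_difference_general {S U : Type*}
    [Fintype S] [Fintype U]
    [DecidableEq S] [DecidableEq U]
    (P : S → U → S → ℝ)
    (hP_nonneg : ∀ s u s', 0 ≤ P s u s') (hP_sum : ∀ s u, ∑ s', P s u s' = 1)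
    (c : S × U → ℝ)
    (γ : ℝ) (hγ0 : 0 ≤ γ) (hγ1 : γ < 1)
    (μ₀ : S → ℝ)
    (π πbar : S → U → ℝ)
    (hπ_nonneg : ∀ s u, 0 ≤ π s u) (hπ_sum : ∀ s, ∑ u, π s u = 1)
    (hπbar_nonneg : ∀ s u, 0 ≤ πbar s u) (hπbar_sum : ∀ s, ∑ u, πbar s u = 1) :
    Jval P c γ μ₀ πbar
      = Jval P c γ μ₀ π
        + ∑' t : ℕ, γ ^ t *
            ∑ p : S × U, saDist P πbar (initSA μ₀ πbar) t p * Aval P c γ π p := by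
  have hP : ∀ s u, P s u ∈ stdSimplex ℝ S := fun s u => ⟨hP_nonneg s u, hP_sum s u⟩
  have hπ : ∀ s, π s ∈ stdSimplex ℝ U := fun s => ⟨hπ_nonneg s, hπ_sum s⟩
  have hπbar : ∀ s, πbar s ∈ stdSimplex ℝ U := fun s => ⟨hπbar_nonneg s, hπbar_sum s⟩
  set ρ := saDist P πbar (initSA μ₀ πbar)
  set v : ℕ → ℝ := fun t => γ ^ t * expCost (fun p => Vval P c γ π p.1) (ρ t)
  have hv : Summable v := summable_expCost_saDist hγ0 hγ1 hP hπbar _ _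
  have hcost : Summable fun t => γ ^ t * expCost c (ρ t) :=
    summable_expCost_saDist hγ0 hγ1 hP hπbar _ _
  have hv0 : v 0 = Jval P c γ μ₀ π := by
    simp [v, ρ, saDist, expCost_comp_fst_initSA _ _ hπbar_sum, Jval_eq_sum_Vval hγ0 hγ1 hP hπ]
  have hstep : ∀ t, γ ^ t * expCost (Aval P c γ π) (ρ t)
      = γ ^ t * expCost c (ρ t) + (v (t + 1) - v t) := fun t => by
    simp only [expCost_Aval hγ0 hγ1 hP hπ hπbar_sum, v, ρ, saDist, pow_succ]
    ring
  have hshift : Summable fun t => v (t + 1) := (summable_nat_add_iff 1).2 hv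
  change _ = _ + ∑' t, γ ^ t * expCost (Aval P c γ π) (ρ t)
  rw [tsum_congr hstep, hcost.tsum_add (hshift.sub hv), hshift.tsum_sub hv, hv.tsum_eq_zero_add,
    hv0, Jval]
  ring

/-- Performance difference identity: for any two stationary policies `π`, `π̄`
in a finite discounted MDP,
`J(π̄) = J(π) + ∑_t γ^t E_{(s,u) ~ ρ_t^π̄}[A^π(s,u)]`. -/
theorem performance_difference {S U : Type*}
    [Fintype S] [Nonempty S] [Fintype U] [Nonempty U]
    [DecidableEq S] [DecidableEq U]
    (P : S → U → S → ℝ)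
    (hP_nonneg : ∀ s u s', 0 ≤ P s u s') (hP_sum : ∀ s u, ∑ s', P s u s' = 1)
    (c : S × U → ℝ) (hc : ∀ p, |c p| ≤ 1)
    (γ : ℝ) (hγ0 : 0 ≤ γ) (hγ1 : γ < 1)
    (μ₀ : S → ℝ) (hμ₀_nonneg : ∀ s, 0 ≤ μ₀ s) (hμ₀_sum : ∑ s, μ₀ s = 1)
    (π πbar : S → U → ℝ)
    (hπ_nonneg : ∀ s u, 0 ≤ π s u) (hπ_sum : ∀ s, ∑ u, π s u = 1)
    (hπbar_nonneg : ∀ s u, 0 ≤ πbar s u) (hπbar_sum : ∀ s, ∑ u, πbar s u = 1) :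
    Jval P c γ μ₀ πbar
      = Jval P c γ μ₀ π
        + ∑' t : ℕ, γ ^ t *
            ∑ p : S × U, saDist P πbar (initSA μ₀ πbar) t p * Aval P c γ π p :=
  performance_difference_general P hP_nonneg hP_sum c γ hγ0 hγ1 μ₀ π πbar hπ_nonneg hπ_sum
    hπbar_nonneg hπbar_sum
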